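/- If T: E → F is an almost interval preserving operator between Banach lattices and A is an almost Dunford-Pettis subset of E, then T(A) is an almost Dunford-Pettis subset of F. -/

import Mathlib

open Filter Topology Pointwise

variable {E F G X : Type*}

section Defs

variable [NormedAddCommGroup E] [Lattice E] [HasSolidNorm E] [IsOrderedAddMonoid E] [NormedSpace ℝ E]

/-- `|f|` of a functional evaluated at `x ≥ 0`: `sup {f y : |y| ≤ x}`. -/
noncomputable def absEval (f : E →L[ℝ] ℝ) (x : E) : ℝ :=
  ⨆ y : {y : E // |y| ≤ x}, f y.1

/-- `|f| ⊓ |g| = 0` in the dual lattice, via the Riesz-Kantorovich formula. -/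
def DisjointPair (f g : E →L[ℝ] ℝ) : Prop :=
  ∀ x : E, 0 ≤ x →
    (⨅ y : {y : E // 0 ≤ y ∧ y ≤ x}, (absEval f y.1 + absEval g (x - y.1))) = 0

/-- A pairwise disjoint sequence of functionals. -/
def DisjointSeqDual (f : ℕ → E →L[ℝ] ℝ) : Prop :=
  ∀ n m, n ≠ m → DisjointPair (f n) (f m)

/-- A weakly null sequence in a normed space. -/
def WeaklyNullSeq {Y : Type*} [NormedAddCommGroup Y] [NormedSpace ℝ Y] (y : ℕ → Y) : Prop :=
  ∀ φ : Y →L[ℝ] ℝ, Tendsto (fun n => φ (y n)) atTop (𝓝 0)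

/-- An almost Dunford-Pettis set: disjoint weakly null sequences in the dual converge
uniformly to zero on it. -/
def AlmostDPSet (A : Set E) : Prop :=
  ∀ f : ℕ → E →L[ℝ] ℝ, DisjointSeqDual f → WeaklyNullSeq f →
    Tendsto (fun n => ⨆ a : A, |f n a.1|) atTop (𝓝 0)

end Defs

variable [NormedAddCommGroup E] [Lattice E] [HasSolidNorm E] [IsOrderedAddMonoid E] [NormedSpace ℝ E]
  [NormedAddCommGroup F] [Lattice F] [HasSolidNorm F] [IsOrderedAddMonoid F] [NormedSpace ℝ F] in
/-- An almost interval preserving operator: positive, with `T[0,x]` dense in `[0,Tx]`. -/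
def AlmostIntervalPreserving (T : E →L[ℝ] F) : Prop :=
  (∀ x : E, 0 ≤ x → 0 ≤ T x) ∧
    ∀ x : E, 0 ≤ x → Set.Icc (0 : F) (T x) ⊆ closure (T '' Set.Icc 0 x)


/-! Precomposition with `T` is the adjoint `T*`, so it maps weakly null sequences of `F*` to weakly
null sequences of `E*`, and `sup_{T(A)} |f| = sup_A |f ∘ T|`. It remains that `T*` preserves
disjointness. The Riesz–Kantorovich infimum for `|f ∘ T| ⊓ |g ∘ T|` at `x` is dominated by the sums
`|f|(T z) + |g|(T (x - z))` with `0 ≤ z ≤ x`; since `|f|(·)` is Lipschitz on the positive cone and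
`T[0,x]` is dense in `[0,Tx]`, these approximate the sums `|f|(w) + |g|(Tx - w)` with
`0 ≤ w ≤ Tx`, whose infimum is `0` by disjointness of `f` and `g`. -/

lemma exists_abs_le_norm_sub_le [NormedAddCommGroup E] [Lattice E] [HasSolidNorm E]
    [IsOrderedAddMonoid E] {u v y : E} (hv : 0 ≤ v) (hy : |y| ≤ u) :
    ∃ y', |y'| ≤ v ∧ ‖y - y'‖ ≤ 2 * ‖u - v‖ := by
  refine ⟨(y ⊓ v) ⊔ -v,
    abs_le'.mpr ⟨sup_le inf_le_right (neg_le_self hv), neg_le.mpr le_sup_right⟩, ?_⟩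
  have hy_eq : y = (y ⊓ u) ⊔ -u := by
    rw [inf_eq_left.mpr ((le_abs_self y).trans hy),
      sup_eq_left.mpr (neg_le.mp ((neg_le_abs y).trans hy))]
  calc ‖y - ((y ⊓ v) ⊔ -v)‖ = ‖(y ⊓ u) ⊔ -u - (y ⊓ v) ⊔ -v‖ := by rw [← hy_eq]
    _ ≤ ‖y ⊓ u - y ⊓ v‖ + ‖-u - -v‖ := norm_sup_sub_sup_le_add_norm _ _ _ _
    _ ≤ (‖y - y‖ + ‖u - v‖) + ‖u - v‖ := by
        gcongr
        · exact norm_inf_sub_inf_le_add_norm _ _ _ _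
        · rw [← norm_neg, neg_sub, sub_neg_eq_add, neg_add_eq_sub]
    _ = 2 * ‖u - v‖ := by rw [sub_self, norm_zero, zero_add, two_mul]

section AbsEval

variable [NormedAddCommGroup E] [Lattice E] [NormedSpace ℝ E] (f : E →L[ℝ] ℝ)

lemma absEval_le [IsOrderedAddMonoid E] {x : E} (hx : 0 ≤ x) {c : ℝ}
    (h : ∀ y, |y| ≤ x → f y ≤ c) : absEval f x ≤ c :=
  have : Nonempty {y : E // |y| ≤ x} := ⟨⟨0, by simpa using hx⟩⟩
  ciSup_le fun y => h y.1 y.2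

variable [HasSolidNorm E]

lemma absEval_bddAbove (x : E) : BddAbove (Set.range fun y : {y : E // |y| ≤ x} => f y.1) := by
  refine ⟨‖f‖ * ‖x‖, ?_⟩
  rintro _ ⟨⟨y, hy⟩, rfl⟩
  calc f y ≤ ‖f y‖ := Real.le_norm_self _
    _ ≤ ‖f‖ * ‖y‖ := f.le_opNorm y
    _ ≤ ‖f‖ * ‖x‖ := by gcongr; exact norm_le_norm_of_abs_le_abs (hy.trans (le_abs_self x))

lemma le_absEval {x y : E} (hy : |y| ≤ x) : f y ≤ absEval f x :=
  le_ciSup (absEval_bddAbove f x) ⟨y, hy⟩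

variable [IsOrderedAddMonoid E]

lemma absEval_nonneg {x : E} (hx : 0 ≤ x) : 0 ≤ absEval f x := by
  simpa using le_absEval f (y := 0) (by simpa using hx)

lemma absEval_le_add_norm_sub {u v : E} (hu : 0 ≤ u) (hv : 0 ≤ v) :
    absEval f u ≤ absEval f v + 2 * ‖f‖ * ‖u - v‖ := by
  refine absEval_le f hu fun y hy => ?_
  obtain ⟨y', hy'v, hyy'⟩ := exists_abs_le_norm_sub_le hv hy
  calc f y = f y' + f (y - y') := by rw [← map_add, add_sub_cancel]
    _ ≤ absEval f v + ‖f‖ * ‖y - y'‖ :=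
        add_le_add (le_absEval f hy'v) ((Real.le_norm_self _).trans (f.le_opNorm _))
    _ ≤ absEval f v + 2 * ‖f‖ * ‖u - v‖ := by nlinarith [norm_nonneg f]

lemma lipschitzOnWith_absEval : LipschitzOnWith (2 * ‖f‖₊) (absEval f) (Set.Ici 0) := by
  refine LipschitzOnWith.of_dist_le_mul fun u hu v hv => ?_
  rw [Real.dist_eq, dist_eq_norm, abs_sub_le_iff]
  simp only [NNReal.coe_mul, coe_nnnorm, NNReal.coe_ofNat]
  constructor
  · linarith [absEval_le_add_norm_sub f hu hv]
  · have := absEval_le_add_norm_sub f hv hu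
    rw [norm_sub_rev] at this
    linarith

lemma disjointPair_iff {f g : E →L[ℝ] ℝ} : DisjointPair f g ↔
    ∀ x : E, 0 ≤ x → ∀ ε > 0, ∃ y ∈ Set.Icc 0 x, absEval f y + absEval g (x - y) < ε := by
  refine forall₂_congr fun x hx => ?_
  have : Nonempty {y : E // 0 ≤ y ∧ y ≤ x} := ⟨⟨0, le_rfl, hx⟩⟩
  have hnonneg (y : {y : E // 0 ≤ y ∧ y ≤ x}) : 0 ≤ absEval f y.1 + absEval g (x - y.1) :=
    add_nonneg (absEval_nonneg f y.2.1) (absEval_nonneg g (sub_nonneg.mpr y.2.2))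
  constructor
  · intro h ε hε
    obtain ⟨⟨y, hy⟩, hyε⟩ := exists_lt_of_ciInf_lt (h.trans_lt hε)
    exact ⟨y, hy, hyε⟩
  · intro h
    refine ciInf_eq_of_forall_ge_of_forall_gt_exists_lt hnonneg fun ε hε => ?_
    obtain ⟨y, hy, hyε⟩ := h ε hε
    exact ⟨⟨y, hy⟩, hyε⟩

end AbsEval

section Operators

variable [NormedAddCommGroup E] [Lattice E] [IsOrderedAddMonoid E] [NormedSpace ℝ E]
  [NormedAddCommGroup F] [Lattice F] [HasSolidNorm F] [IsOrderedAddMonoid F] [NormedSpace ℝ F]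
  {T : E →L[ℝ] F}

lemma absEval_comp_le (hT : ∀ x : E, 0 ≤ x → 0 ≤ T x) (f : F →L[ℝ] ℝ) {y : E} (hy : 0 ≤ y) :
    absEval (f.comp T) y ≤ absEval f (T y) := by
  have hmono : Monotone T := (monotone_iff_map_nonneg T).mpr hT
  refine absEval_le _ hy fun z hz => le_absEval f (abs_le'.mpr ⟨hmono ?_, ?_⟩)
  · exact (le_abs_self z).trans hz
  · simpa using hmono ((neg_le_abs z).trans hz)

variable [HasSolidNorm E]

lemma DisjointPair.comp (hT : AlmostIntervalPreserving T) {f g : F →L[ℝ] ℝ}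
    (hfg : DisjointPair f g) : DisjointPair (f.comp T) (g.comp T) := by
  rw [disjointPair_iff] at hfg ⊢
  intro x hx ε hε
  obtain ⟨w, hw, hwε⟩ := hfg (T x) (hT.1 x hx) ε hε
  -- The Riesz-Kantorovich sum at `T x` is continuous in the splitting point, and `w` is a limit
  -- of splitting points `T z` with `0 ≤ z ≤ x`.
  have hcont : ContinuousOn (fun w' => absEval f w' + absEval g (T x - w')) (Set.Icc 0 (T x)) :=
    ((lipschitzOnWith_absEval f).continuousOn.mono Set.Icc_subset_Ici_self).add <|
      (lipschitzOnWith_absEval g).continuousOn.comp (continuousOn_const.sub continuousOn_id)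
        fun w' hw' => sub_nonneg.mpr hw'.2
  have himage : T '' Set.Icc 0 x ⊆ Set.Icc 0 (T x) := by
    rintro _ ⟨z, hz, rfl⟩
    exact ⟨hT.1 z hz.1, by simpa using hT.1 (x - z) (sub_nonneg.mpr hz.2)⟩
  have : (𝓝[T '' Set.Icc 0 x] w).NeBot := mem_closure_iff_nhdsWithin_neBot.mp (hT.2 x hx hw)
  obtain ⟨_, hzε, z, hz, rfl⟩ :=
    (((hcont w hw).mono himage).eventually_lt_const hwε |>.and self_mem_nhdsWithin).exists
  refine ⟨z, hz, ?_⟩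
  calc absEval (f.comp T) z + absEval (g.comp T) (x - z)
      ≤ absEval f (T z) + absEval g (T (x - z)) :=
        add_le_add (absEval_comp_le hT.1 f hz.1) (absEval_comp_le hT.1 g (sub_nonneg.mpr hz.2))
    _ < ε := by rwa [map_sub]

end Operators

lemma WeaklyNullSeq.map {Y Z : Type*} [NormedAddCommGroup Y] [NormedSpace ℝ Y]
    [NormedAddCommGroup Z] [NormedSpace ℝ Z] {y : ℕ → Y} (hy : WeaklyNullSeq y) (L : Y →L[ℝ] Z) :
    WeaklyNullSeq fun n => L (y n) :=
  fun φ => hy (φ.comp L)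

lemma iSup_image_subtype {α β γ : Type*} [SupSet α] (f : γ → β) (g : β → α) (s : Set γ) :
    ⨆ b : f '' s, g b = ⨆ a : s, g (f a) := by
  rw [← sSup_image', Set.image_image, sSup_image']

theorem almostIntervalPreserving_image_almostDP_general [NormedAddCommGroup E] [Lattice E] [HasSolidNorm E] [IsOrderedAddMonoid E] [NormedSpace ℝ E] [NormedAddCommGroup F] [Lattice F] [HasSolidNorm F] [IsOrderedAddMonoid F] [NormedSpace ℝ F]
    (T : E →L[ℝ] F) (hT : AlmostIntervalPreserving T)
    (A : Set E) (hA : AlmostDPSet A) : AlmostDPSet (T '' A) := by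
  intro f hf_disj hf_null
  have := hA (fun n => (f n).comp T) (fun n m hnm => (hf_disj n m hnm).comp hT)
    (hf_null.map ((ContinuousLinearMap.compL ℝ E F ℝ).flip T))
  convert this using 3 with n
  exact iSup_image_subtype T (fun b => |f n b|) A

/-- Almost interval preserving operators map almost Dunford-Pettis sets to almost
Dunford-Pettis sets. -/
theorem almostIntervalPreserving_image_almostDP [NormedAddCommGroup E] [Lattice E] [HasSolidNorm E] [IsOrderedAddMonoid E] [NormedSpace ℝ E] [PosSMulStrictMono ℝ E] [PosSMulReflectLT ℝ E] [CompleteSpace E] [NormedAddCommGroup F] [Lattice F] [HasSolidNorm F] [IsOrderedAddMonoid F] [NormedSpace ℝ F] [PosSMulStrictMono ℝ F] [PosSMulReflectLT ℝ F] [CompleteSpace F]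
    (T : E →L[ℝ] F) (hT : AlmostIntervalPreserving T)
    (A : Set E) (hA : AlmostDPSet A) : AlmostDPSet (T '' A) :=
  almostIntervalPreserving_image_almostDP_general T hT A hA
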